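/- The map φ : X → 𝒳 sending x to the thread (X_*^n) is injective and continuous; in particular, if x ≠ y then X_*^n ∩ Y_*^n = ∅ for all sufficiently large n. -/

import Mathlib

open Metric Set Filter

/-- The FASO bonding map at one level: `q(C) = ⋃_{c ∈ C} B(c,ε) ∩ A`. -/
def qmap {X : Type*} [MetricSpace X] (ε : ℝ) (A : Set X) (C : Set X) : Set X :=
  ⋃ c ∈ C, Metric.ball c ε ∩ A

/-- Iterated bonding maps: `qdown ε A n k` is `q_{n, n+k}`, mapping subsets at level `n+k`
down to subsets at level `n`. -/
def qdown {X : Type*} [MetricSpace X] (ε : ℕ → ℝ) (A : ℕ → Set X) (n : ℕ) :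
    ℕ → Set X → Set X
  | 0, C => C
  | k + 1, C => qdown ε A n k (qmap (ε (n + k)) (A (n + k)) C)

/-- `A_m(x)`: the set of nearest points of `A` to `x`. -/
def nearestPts {X : Type*} [MetricSpace X] (x : X) (A : Set X) : Set X :=
  {a ∈ A | dist x a = Metric.infDist x A}

/-- `X_*^n = ⋃_{m > n} q_{n,m}(A_m(x))`. -/
def Xstar {X : Type*} [MetricSpace X] (ε : ℕ → ℝ) (A : ℕ → Set X) (x : X) (n : ℕ) :
    Set X :=
  ⋃ m, ⋃ (_ : n < m), qdown ε A n (m - n) (nearestPts x (A m))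

/-- The finite space `U_δ(A)`: nonempty subsets of `A` of diameter `< δ`. -/
def Ufin {X : Type*} [MetricSpace X] (δ : ℝ) (A : Set X) : Type _ :=
  {C : Set X // C ⊆ A ∧ C.Nonempty ∧ Metric.diam C < δ}

/-- The Alexandroff topology of the reverse-inclusion order on `U_δ(A)`
(`C ≤ D` iff `D ⊆ C`): the open sets are the lower sets, i.e. the sets closed under
passing to supersets; the minimal open neighborhood of `C` is `{D : C ⊆ D}`. -/
instance UfinTop {X : Type*} [MetricSpace X] (δ : ℝ) (A : Set X) :
    TopologicalSpace (Ufin δ A) where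
  IsOpen S := ∀ C ∈ S, ∀ D : Ufin δ A, C.1 ⊆ D.1 → D ∈ S
  isOpen_univ := fun _ _ D _ => Set.mem_univ D
  isOpen_inter := fun s t hs ht C hC D hCD =>
    ⟨hs C hC.1 D hCD, ht C hC.2 D hCD⟩
  isOpen_sUnion := fun S hS C hC D hCD => by
    obtain ⟨s, hsS, hCs⟩ := hC
    exact ⟨s, hsS, hS s hsS C hCs D hCD⟩

/-- The inverse limit `𝒳` of the inverse sequence `(U_{4ε_n}(A_n), q_{n,n+1})`, as the
subspace of the product `Π n, U_{4ε_n}(A_n)` consisting of the threads. -/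
def FasoLimit {X : Type*} [MetricSpace X] (ε : ℕ → ℝ) (A : ℕ → Set X) : Type _ :=
  {f : (n : ℕ) → Ufin (4 * ε n) (A n) // ∀ n, qmap (ε n) (A n) (f (n + 1)).1 = (f n).1}

instance FasoLimitTop {X : Type*} [MetricSpace X] (ε : ℕ → ℝ) (A : ℕ → Set X) :
    TopologicalSpace (FasoLimit ε A) :=
  inferInstanceAs (TopologicalSpace
    {f : (n : ℕ) → Ufin (4 * ε n) (A n) //
      ∀ n, qmap (ε n) (A n) (f (n + 1)).1 = (f n).1})

/-! Each term `q_{n,m}(A_m(x))` of `X_*^n` lies in `A_n` within `2ε_{n+1} + ε_n` of `x`, since the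
bonding radii at least halve; this gives the diameter bound `4ε_n` and, as `ε_n → 0`, disjointness
of `X_*^n` and `Y_*^n` for `x ≠ y`, hence injectivity. If `y` is close to `x`, every nearest point
of `x` in `A_m` is `ε_m`-close to a nearest point of `y` in `A_{m+1}`, so the `m`-th term for `x`
lies in the `(m+1)`-st term for `y`. With `y = x` the terms increase, so the finite set `X_*^n`
is one of them, and then `X_*^n ⊆ Y_*^n` for `y` near `x`: continuity for the Alexandroff
topology. -/

open Topology

section

variable {X : Type*} [MetricSpace X]

section Bonding

variable {δ : ℝ} {B C D : Set X}

lemma mem_qmap {a : X} : a ∈ qmap δ B C ↔ (∃ c ∈ C, dist a c < δ) ∧ a ∈ B := by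
  simp only [qmap, mem_iUnion, mem_inter_iff, mem_ball, exists_prop]
  tauto

lemma qmap_mono (h : C ⊆ D) : qmap δ B C ⊆ qmap δ B D :=
  biUnion_subset_biUnion_left h

lemma qmap_subset : qmap δ B C ⊆ B := fun _ ha ↦ (mem_qmap.1 ha).2

lemma qmap_iUnion {ι : Sort*} (S : ι → Set X) : qmap δ B (⋃ i, S i) = ⋃ i, qmap δ B (S i) :=
  biUnion_iUnion S _

lemma qmap_subset_closedBall {x : X} {r : ℝ} (h : C ⊆ closedBall x r) :
    qmap δ B C ⊆ closedBall x (r + δ) := by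
  intro a ha
  obtain ⟨⟨c, hc, hac⟩, -⟩ := mem_qmap.1 ha
  have hcx := mem_closedBall.1 (h hc)
  rw [mem_closedBall]
  linarith [dist_triangle a c x]

lemma qmap_nonempty (hB : ∀ c : X, ∃ b ∈ B, dist c b < δ) (hC : C.Nonempty) :
    (qmap δ B C).Nonempty := by
  obtain ⟨c, hc⟩ := hC
  obtain ⟨b, hb, hcb⟩ := hB c
  exact ⟨b, mem_qmap.2 ⟨⟨c, hc, by rwa [dist_comm]⟩, hb⟩⟩

lemma subset_qmap_of_mem {x b : X} {γ : ℝ} (hb : b ∈ C) (hx : infDist x B ≤ γ)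
    (hxb : dist x b < δ - γ) : nearestPts x B ⊆ qmap δ B C := by
  intro a ha
  refine mem_qmap.2 ⟨⟨b, hb, ?_⟩, ha.1⟩
  have hxa : dist a x ≤ γ := by rw [dist_comm, ha.2]; exact hx
  linarith [dist_triangle a x b]

end Bonding

section Iterated

variable (ε : ℕ → ℝ) (A : ℕ → Set X)

lemma qdown_mono {n : ℕ} : ∀ {k : ℕ} {C D : Set X}, C ⊆ D → qdown ε A n k C ⊆ qdown ε A n k D
  | 0, _, _, h => h
  | k + 1, _, _, h => qdown_mono (k := k) (qmap_mono h)

lemma qdown_succ_eq_qmap (n : ℕ) : ∀ (k : ℕ) (C : Set X),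
    qdown ε A n (k + 1) C = qmap (ε n) (A n) (qdown ε A (n + 1) k C)
  | 0, _ => rfl
  | k + 1, C => by
    rw [qdown, qdown_succ_eq_qmap n k, qdown, Nat.add_right_comm n 1 k]
    rfl

lemma qdown_succ_subset (n : ℕ) : ∀ (k : ℕ) (C : Set X), qdown ε A n (k + 1) C ⊆ A n
  | 0, _ => qmap_subset
  | k + 1, _ => qdown_succ_subset n k _

lemma qdown_nonempty (hA : ∀ n (c : X), ∃ a ∈ A n, dist c a < ε n) :
    ∀ (n k : ℕ) {C : Set X}, C.Nonempty → (qdown ε A n k C).Nonempty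
  | _, 0, _, hC => hC
  | n, k + 1, _, hC => qdown_nonempty hA n k (qmap_nonempty (hA (n + k)) hC)

lemma qdown_subset_closedBall (hε : ∀ m, 2 * ε (m + 1) ≤ ε m) {x : X} :
    ∀ (n k : ℕ) {C : Set X} {r : ℝ}, C ⊆ closedBall x r →
      qdown ε A n k C ⊆ closedBall x (r + 2 * ε n - 2 * ε (n + k))
  | n, 0, _, _, h => by simpa [qdown] using h
  | n, k + 1, _, _, h => by
    refine (qdown_subset_closedBall hε n k (qmap_subset_closedBall h)).trans
      (closedBall_subset_closedBall ?_)
    rw [← Nat.add_assoc]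
    linarith [hε (n + k)]

end Iterated

lemma nearestPts_nonempty {A : Set X} (hA : A.Finite) (hne : A.Nonempty) (x : X) :
    (nearestPts x A).Nonempty := by
  obtain ⟨a, ha, hxa⟩ := hA.isCompact.exists_infDist_eq_dist hne x
  exact ⟨a, ha, hxa.symm⟩

lemma continuous_Ufin_of_eventually_subset {Y : Type*} [TopologicalSpace Y] {δ : ℝ}
    {B : Set X} {f : Y → Ufin δ B} (hf : ∀ y, ∀ᶠ z in 𝓝 y, (f y).1 ⊆ (f z).1) :
    Continuous f := by
  refine continuous_def.2 fun S hS ↦ isOpen_iff_mem_nhds.2 fun y hy ↦ ?_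
  filter_upwards [hf y] with z hz
  exact hS _ hy _ hz

section Threads

variable {ε : ℕ → ℝ} {A : ℕ → Set X} {γ : ℕ → ℝ}

variable (ε A) in
/-- The term `q_{n,m}(A_m(x))` of the union defining `X_*^n`, indexed by `m = n + k + 1`. -/
def XstarTerm (x : X) (n k : ℕ) : Set X :=
  qdown ε A n (k + 1) (nearestPts x (A (n + k + 1)))

lemma Xstar_eq_iUnion (x : X) (n : ℕ) : Xstar ε A x n = ⋃ k, XstarTerm ε A x n k := by
  ext a
  simp only [Xstar, XstarTerm, mem_iUnion, exists_prop]
  constructor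
  · rintro ⟨m, hnm, ha⟩
    obtain ⟨k, rfl⟩ := Nat.exists_eq_add_of_lt hnm
    exact ⟨k, by simpa [Nat.add_assoc, Nat.add_sub_cancel_left] using ha⟩
  · rintro ⟨k, ha⟩
    exact ⟨n + k + 1, by omega, by simpa [Nat.add_assoc, Nat.add_sub_cancel_left] using ha⟩

lemma qmap_XstarTerm (x : X) (n k : ℕ) :
    qmap (ε n) (A n) (XstarTerm ε A x (n + 1) k) = XstarTerm ε A x n (k + 1) := by
  rw [XstarTerm, XstarTerm, qdown_succ_eq_qmap ε A n (k + 1), Nat.add_right_comm n 1 k]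
  rfl

lemma XstarTerm_subset (x : X) (n k : ℕ) : XstarTerm ε A x n k ⊆ A n :=
  qdown_succ_subset ε A n k _

lemma Xstar_subset (x : X) (n : ℕ) : Xstar ε A x n ⊆ A n := by
  rw [Xstar_eq_iUnion]
  exact iUnion_subset (XstarTerm_subset x n)

/-- The properties of a FASO used here; `γ n` is any upper bound of `x ↦ infDist x (A n)`,
the paper's `γ_n` being its supremum. -/
structure IsFASO (ε : ℕ → ℝ) (A : ℕ → Set X) (γ : ℕ → ℝ) : Prop where
  finite : ∀ n, (A n).Finite
  exists_dist_lt : ∀ n (x : X), ∃ a ∈ A n, dist x a < ε n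
  infDist_le : ∀ n (x : X), infDist x (A n) ≤ γ n
  lt_half_sub : ∀ n, ε (n + 1) < (ε n - γ n) / 2

namespace IsFASO

lemma gamma_nonneg (h : IsFASO ε A γ) (x : X) (n : ℕ) : 0 ≤ γ n :=
  infDist_nonneg.trans (h.infDist_le n x)

lemma infDist_lt (h : IsFASO ε A γ) (x : X) (n : ℕ) : infDist x (A n) < ε n := by
  obtain ⟨a, ha, hxa⟩ := h.exists_dist_lt n x
  exact (infDist_le_dist_of_mem ha).trans_lt hxa

lemma eps_pos (h : IsFASO ε A γ) (x : X) (n : ℕ) : 0 < ε n :=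
  infDist_nonneg.trans_lt (h.infDist_lt x n)

lemma gamma_add_two_mul_eps_succ_lt (h : IsFASO ε A γ) (n : ℕ) : γ n + 2 * ε (n + 1) < ε n := by
  linarith [h.lt_half_sub n]

lemma nearestPts_nonempty (h : IsFASO ε A γ) (x : X) (n : ℕ) :
    (nearestPts x (A n)).Nonempty :=
  _root_.nearestPts_nonempty (h.finite n) ((h.exists_dist_lt n x).imp fun _ ↦ And.left) x

lemma XstarTerm_subset_succ (h : IsFASO ε A γ) {x y : X} {n k : ℕ}
    (hxy : dist x y < ε (n + k + 1) - γ (n + k + 1) - ε (n + k + 2)) :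
    XstarTerm ε A x n k ⊆ XstarTerm ε A y n (k + 1) := by
  obtain ⟨b, hb⟩ := h.nearestPts_nonempty y (n + k + 2)
  have hyb : dist y b < ε (n + k + 2) := hb.2 ▸ h.infDist_lt y _
  refine qdown_mono ε A (subset_qmap_of_mem hb (h.infDist_le _ x) ?_)
  rw [← Nat.add_assoc]
  linarith [dist_triangle x y b]

lemma monotone_XstarTerm (h : IsFASO ε A γ) (x : X) (n : ℕ) :
    Monotone (XstarTerm ε A x n) :=
  monotone_nat_of_le_succ fun k ↦ h.XstarTerm_subset_succ <| by
    rw [dist_self]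
    linarith [h.gamma_add_two_mul_eps_succ_lt (n + k + 1), h.eps_pos x (n + k + 2)]

lemma XstarTerm_subset_closedBall (h : IsFASO ε A γ) (x : X) (n k : ℕ) :
    XstarTerm ε A x n k ⊆ closedBall x (2 * ε (n + 1) + ε n) := by
  have hε (m : ℕ) : 2 * ε (m + 1) ≤ ε m := by
    linarith [h.gamma_add_two_mul_eps_succ_lt m, h.gamma_nonneg x m]
  have hnear : nearestPts x (A (n + 1 + k)) ⊆ closedBall x (γ (n + 1 + k)) := fun a ha ↦ by
    rw [mem_closedBall, dist_comm, ha.2]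
    exact h.infDist_le _ x
  rw [XstarTerm, qdown_succ_eq_qmap, Nat.add_right_comm]
  refine qmap_subset_closedBall <| (qdown_subset_closedBall ε A hε (n + 1) k hnear).trans
    (closedBall_subset_closedBall ?_)
  linarith [h.gamma_add_two_mul_eps_succ_lt (n + 1 + k), h.eps_pos x (n + 1 + k),
    h.eps_pos x (n + 1 + k + 1)]

lemma Xstar_subset_closedBall (h : IsFASO ε A γ) (x : X) (n : ℕ) :
    Xstar ε A x n ⊆ closedBall x (2 * ε (n + 1) + ε n) := by
  rw [Xstar_eq_iUnion]
  exact iUnion_subset (h.XstarTerm_subset_closedBall x n)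

lemma diam_Xstar_lt (h : IsFASO ε A γ) (x : X) (n : ℕ) : diam (Xstar ε A x n) < 4 * ε n := by
  have hr : 0 ≤ 2 * ε (n + 1) + ε n := by linarith [h.eps_pos x n, h.eps_pos x (n + 1)]
  calc diam (Xstar ε A x n) ≤ 2 * (2 * ε (n + 1) + ε n) :=
        (diam_mono (h.Xstar_subset_closedBall x n) isBounded_closedBall).trans
          (diam_closedBall hr)
    _ < 4 * ε n := by linarith [h.gamma_add_two_mul_eps_succ_lt n, h.gamma_nonneg x n]

lemma Xstar_nonempty (h : IsFASO ε A γ) (x : X) (n : ℕ) : (Xstar ε A x n).Nonempty := by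
  rw [Xstar_eq_iUnion]
  exact (qdown_nonempty ε A h.exists_dist_lt n 1 (h.nearestPts_nonempty x _)).mono
    (subset_iUnion (XstarTerm ε A x n) 0)

lemma qmap_Xstar_succ (h : IsFASO ε A γ) (x : X) (n : ℕ) :
    qmap (ε n) (A n) (Xstar ε A x (n + 1)) = Xstar ε A x n := by
  simp only [Xstar_eq_iUnion, qmap_iUnion, qmap_XstarTerm]
  exact (h.monotone_XstarTerm x n).iSup_nat_add 1

lemma exists_Xstar_subset_XstarTerm (h : IsFASO ε A γ) (x : X) (n : ℕ) :
    ∃ k, Xstar ε A x n ⊆ XstarTerm ε A x n k := by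
  have hfin : (Xstar ε A x n).Finite := (h.finite n).subset (Xstar_subset x n)
  rw [← hfin.coe_toFinset]
  refine (h.monotone_XstarTerm x n).directed_le.exists_mem_subset_of_finset_subset_biUnion ?_
  rw [hfin.coe_toFinset, Xstar_eq_iUnion]

lemma eventually_Xstar_subset (h : IsFASO ε A γ) (x : X) (n : ℕ) :
    ∀ᶠ y in 𝓝 x, Xstar ε A x n ⊆ Xstar ε A y n := by
  obtain ⟨k, hk⟩ := h.exists_Xstar_subset_XstarTerm x n
  set m := n + k + 1
  have hδ : 0 < ε m - γ m - ε (m + 1) := by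
    linarith [h.gamma_add_two_mul_eps_succ_lt m, h.eps_pos x (m + 1)]
  filter_upwards [ball_mem_nhds x hδ] with y hy
  rw [mem_ball'] at hy
  rw [Xstar_eq_iUnion y]
  exact hk.trans ((h.XstarTerm_subset_succ hy).trans (subset_iUnion _ _))

lemma eventually_disjoint_Xstar (h : IsFASO ε A γ) (hε : Tendsto ε atTop (𝓝 0)) {x y : X}
    (hxy : x ≠ y) : ∀ᶠ n in atTop, Disjoint (Xstar ε A x n) (Xstar ε A y n) := by
  filter_upwards [hε.eventually (gt_mem_nhds (div_pos (dist_pos.2 hxy) four_pos))] with n hn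
  refine (closedBall_disjoint_closedBall ?_).mono (h.Xstar_subset_closedBall x n)
    (h.Xstar_subset_closedBall y n)
  linarith [h.gamma_add_two_mul_eps_succ_lt n, h.gamma_nonneg x n]

def thread (h : IsFASO ε A γ) (x : X) : FasoLimit ε A :=
  ⟨fun n ↦ ⟨Xstar ε A x n, Xstar_subset x n, h.Xstar_nonempty x n, h.diam_Xstar_lt x n⟩,
    h.qmap_Xstar_succ x⟩

lemma continuous_thread (h : IsFASO ε A γ) : Continuous h.thread :=
  (continuous_pi fun n ↦ continuous_Ufin_of_eventually_subset
    fun x ↦ h.eventually_Xstar_subset x n).subtype_mk _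

lemma injective_thread (h : IsFASO ε A γ) (hε : Tendsto ε atTop (𝓝 0)) :
    Function.Injective h.thread := by
  intro x y hxy
  by_contra hne
  obtain ⟨n, hn⟩ := (h.eventually_disjoint_Xstar hε hne).exists
  have hXstar : Xstar ε A x n = Xstar ε A y n := congrArg (fun φ ↦ (φ.1 n).1) hxy
  rw [hXstar, disjoint_self, bot_eq_empty] at hn
  exact (h.Xstar_nonempty y n).ne_empty hn

end IsFASO

end Threads

end

theorem stmt_15_general {X : Type*} [MetricSpace X]
    (ε : ℕ → ℝ) (A : ℕ → Set X) (γ : ℕ → ℝ)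
    (hεlim : Filter.Tendsto ε Filter.atTop (nhds 0))
    (hAfin : ∀ n, (A n).Finite)
    (hApprox : ∀ n, ∀ x : X, ∃ a ∈ A n, dist x a < ε n)
    (hγ : ∀ n, IsLUB (Set.range fun x : X => Metric.infDist x (A n)) (γ n))
    (hrec : ∀ n, ε (n + 1) < (ε n - γ n) / 2)
    :
    ∃ φ : X → FasoLimit ε A,
      (∀ (x : X) (n : ℕ), ((φ x).1 n).1 = Xstar ε A x n) ∧
      Continuous φ ∧ Function.Injective φ ∧
      ∀ x y : X, x ≠ y → ∃ N, ∀ n, N ≤ n → Xstar ε A x n ∩ Xstar ε A y n = ∅ := by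
  have h : IsFASO ε A γ := ⟨hAfin, hApprox, fun n x ↦ (hγ n).1 ⟨x, rfl⟩, hrec⟩
  refine ⟨h.thread, fun _ _ ↦ rfl, h.continuous_thread, h.injective_thread hεlim,
    fun x y hxy ↦ ?_⟩
  exact eventually_atTop.1 <| (h.eventually_disjoint_Xstar hεlim hxy).mono
    fun _ ↦ Disjoint.inter_eq

/-- The map `φ : X → 𝒳`, `x ↦ (X_*^n)`, is injective and continuous; moreover if
`x ≠ y` then `X_*^n ∩ Y_*^n = ∅` for all sufficiently large `n`. -/
theorem stmt_15 {X : Type*} [MetricSpace X] [CompactSpace X] [Nonempty X]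
    (ε : ℕ → ℝ) (A : ℕ → Set X) (γ : ℕ → ℝ)
    (hεpos : ∀ n, 0 < ε n)
    (hεlim : Filter.Tendsto ε Filter.atTop (nhds 0))
    (hAfin : ∀ n, (A n).Finite)
    (hApprox : ∀ n, ∀ x : X, ∃ a ∈ A n, dist x a < ε n)
    (hγ : ∀ n, IsLUB (Set.range fun x : X => Metric.infDist x (A n)) (γ n))
    (hrec : ∀ n, ε (n + 1) < (ε n - γ n) / 2)
    :
    ∃ φ : X → FasoLimit ε A,
      (∀ (x : X) (n : ℕ), ((φ x).1 n).1 = Xstar ε A x n) ∧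
      Continuous φ ∧ Function.Injective φ ∧
      ∀ x y : X, x ≠ y → ∃ N, ∀ n, N ≤ n → Xstar ε A x n ∩ Xstar ε A y n = ∅ :=
  stmt_15_general ε A γ hεlim hAfin hApprox hγ hrec
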